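/- Let V be a set and F : P(V) → P(V) an anti-monotone function. Suppose κ₁ ≤ κ₂ < ρ are infinite cardinals and |F(X)| ≤ ρ for every X ⊆ V with |X| = κ₁. Let K be the operator assigning to each A ⊆ V the smallest F_{κ₂}-closed subset of V containing A. If θ ≥ ρ is a cardinal satisfying D(θ,κ₁,κ₂) = θ, then |K(A)| = θ for every A ⊆ V with |A| = θ. -/

import Mathlib

open Cardinal

/-- A family `D` of subsets of `α` is dense in `[α]^{κ₂}`. -/
def IsDenseIn {α : Type u} (D : Set (Set α)) (κ₂ : Cardinal.{u}) : Prop :=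
  ∀ Y : Set α, #Y = κ₂ → ∃ Z ∈ D, Z ⊆ Y

/-- The density `D(λ,κ₁,κ₂)`. -/
noncomputable def Density (l κ₁ κ₂ : Cardinal.{u}) : Cardinal.{u} :=
  sInf { c : Cardinal.{u} | ∃ D : Set (Set l.out),
    (∀ X ∈ D, #X = κ₁) ∧ IsDenseIn D κ₂ ∧ c = #D }

/-- `F` is anti-monotone: `A ⊆ B` implies `F B ⊆ F A`. -/
def AntiMonotone {α : Type u} (F : Set α → Set α) : Prop :=
  ∀ A B : Set α, A ⊆ B → F B ⊆ F A

/-- `D` is `F_κ`-closed: `F Y ⊆ D` for every `Y ⊆ D` of cardinality `κ`. -/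
def FClosed {α : Type u} (F : Set α → Set α) (κ : Cardinal.{u}) (D : Set α) : Prop :=
  ∀ Y ⊆ D, #Y = κ → F Y ⊆ D

/-- The smallest `F_κ`-closed set containing `A`: the intersection of all
`F_κ`-closed sets containing `A`. -/
def FClosure {α : Type u} (F : Set α → Set α) (κ : Cardinal.{u}) (A : Set α) : Set α :=
  ⋂₀ { D : Set α | A ⊆ D ∧ FClosed F κ D }

/-!
Fix a family `D ⊆ [θ]^κ₁` of size `θ` that is dense in `[θ]^κ₂`; pulled back along an embedding,
it gives every set `S` with `|S| ≤ θ` at most `θ` many `κ₁`-subsets such that each `κ₂`-subset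
of `S` contains one of them. By anti-monotonicity, `F Y ⊆ F Z` whenever `Z ⊆ Y`, so adjoining to
`S` the sets `F Z` for these `Z` (each of size `≤ ρ ≤ θ`) absorbs `F Y` for all `κ₂`-subsets `Y`
of `S` while keeping the size `≤ θ`. Iterating this step `κ₂⁺` times yields a set of size `≤ θ`;
it is `F_κ₂`-closed because `κ₂⁺` is regular, so every `κ₂`-subset appears at a bounded stage.
-/

universe u

open Set

theorem subset_fClosure {α : Type u} (F : Set α → Set α) (κ : Cardinal.{u}) (A : Set α) :
    A ⊆ FClosure F κ A :=
  subset_sInter fun _ hD => hD.1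

theorem fClosure_subset {α : Type u} {F : Set α → Set α} {κ : Cardinal.{u}} {A C : Set α}
    (hAC : A ⊆ C) (hC : FClosed F κ C) : FClosure F κ A ⊆ C :=
  sInter_subset_of_mem ⟨hAC, hC⟩

section DenseFamily

variable {α : Type u} {κ₁ κ₂ : Cardinal.{u}}

theorem exists_isDenseIn_mk_eq_density (h12 : κ₁ ≤ κ₂) (l : Cardinal.{u}) :
    ∃ D : Set (Set l.out), (∀ X ∈ D, #X = κ₁) ∧ IsDenseIn D κ₂ ∧ #D = Density l κ₁ κ₂ := by
  have hne : {c | ∃ D : Set (Set l.out),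
      (∀ X ∈ D, #X = κ₁) ∧ IsDenseIn D κ₂ ∧ c = #D}.Nonempty := by
    refine ⟨_, {Z | #Z = κ₁}, fun _ hZ => hZ, fun Y hY => ?_, rfl⟩
    obtain ⟨Z, hZY, hZ⟩ := le_mk_iff_exists_subset.1 (hY ▸ h12)
    exact ⟨Z, hZ, hZY⟩
  obtain ⟨D, hD, hdense, hcard⟩ := csInf_mem hne
  exact ⟨D, hD, hdense, hcard.symm⟩

theorem exists_dense_subfamily_of_mk_le (h12 : κ₁ ≤ κ₂) {S : Set α} {l : Cardinal.{u}}
    (hS : #S ≤ l) :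
    ∃ E : Set (Set α), (∀ Z ∈ E, #Z = κ₁) ∧ (∀ Y ⊆ S, #Y = κ₂ → ∃ Z ∈ E, Z ⊆ Y) ∧
      #E ≤ Density l κ₁ κ₂ := by
  obtain ⟨D, hD, hdense, hcard⟩ := exists_isDenseIn_mk_eq_density h12 l
  obtain ⟨f⟩ : Nonempty (S ↪ l.out) := by rwa [← le_def, mk_out]
  let pull : Set l.out → Set α := fun Z => Subtype.val '' (f ⁻¹' Z)
  refine ⟨pull '' {Z ∈ D | Z ⊆ range f}, ?_, fun Y hYS hY => ?_, ?_⟩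
  · rintro _ ⟨Z, ⟨hZD, hZf⟩, rfl⟩
    rw [mk_image_eq Subtype.val_injective,
      mk_preimage_of_injective_of_subset_range _ _ f.injective hZf, hD Z hZD]
  · have hY' : #(f '' (Subtype.val ⁻¹' Y)) = κ₂ := by
      rwa [mk_image_eq f.injective, mk_preimage_of_injective_of_subset_range _ _
        Subtype.val_injective (by rwa [Subtype.range_val])]
    obtain ⟨Z, hZD, hZY⟩ := hdense _ hY'
    refine ⟨pull Z, ⟨Z, ⟨hZD, hZY.trans (image_subset_range _ _)⟩, rfl⟩, ?_⟩
    rintro _ ⟨x, hx, rfl⟩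
    obtain ⟨y, hy, hyx⟩ := hZY hx
    rwa [← f.injective hyx]
  · calc #(pull '' {Z ∈ D | Z ⊆ range f}) ≤ #{Z ∈ D | Z ⊆ range f} := mk_image_le
      _ ≤ #D := mk_le_mk_of_subset (sep_subset _ _)
      _ = Density l κ₁ κ₂ := hcard

end DenseFamily

section TransfiniteClosure

variable {α : Type u} {G : Set α → Set α} {θ : Cardinal.{u}} {A : Set α}

theorem mk_transfiniteIterate_le (hθ : ℵ₀ ≤ θ) (hA : #A ≤ θ)
    (hG : ∀ S : Set α, #S ≤ θ → #(G S) ≤ θ) (j : Ordinal.{u}) (hj : j.card ≤ θ) :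
    #(transfiniteIterate G j A : Set α) ≤ θ := by
  induction j using Ordinal.limitRecOn with
  | zero => rwa [← Ordinal.bot_eq_zero, transfiniteIterate_bot]
  | add_one o ih =>
    rw [← Order.succ_eq_add_one, transfiniteIterate_succ _ _ _ (not_isMax o)]
    exact hG _ (ih ((Ordinal.card_le_card (Order.le_succ o)).trans hj))
  | limit o ho ih =>
    -- the stages below `o` are indexed by `Iio o : Set Ordinal.{u}`, a type in `Type (u + 1)`
    rw [transfiniteIterate_limit _ _ _ ho, iSup_eq_iUnion, ← lift_le.{u + 1}]
    refine (mk_iUnion_le_lift _).trans ?_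
    rw [mk_Iio_ordinal, lift_lift, lift_umax.{u, u + 1}]
    refine mul_le_of_le (aleph0_le_lift.2 hθ) (lift_le.2 hj) (ciSup_le' fun i => lift_le.2 ?_)
    exact ih i.1 i.2 ((Ordinal.card_le_card i.2.le).trans hj)

theorem exists_mem_transfiniteIterate_lt {j : Ordinal.{u}} (hj : Order.IsSuccLimit j) {x : α}
    (hx : x ∈ transfiniteIterate G j A) : ∃ i < j, x ∈ transfiniteIterate G i A := by
  rw [transfiniteIterate_limit _ _ _ hj, iSup_eq_iUnion, mem_iUnion] at hx
  obtain ⟨⟨i, hi⟩, hx⟩ := hx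
  exact ⟨i, hi, hx⟩

theorem fClosed_transfiniteIterate_ord_succ (F : Set α → Set α) {κ : Cardinal.{u}}
    (hκ : ℵ₀ ≤ κ) (hGS : ∀ S : Set α, S ⊆ G S)
    (hGF : ∀ S Y : Set α, Y ⊆ S → #Y = κ → F Y ⊆ G S) :
    FClosed F κ (transfiniteIterate G (Order.succ κ).ord A) := by
  have hmono := monotone_transfiniteIterate (J := Ordinal.{u}) G A hGS
  intro Y hYc hY
  choose i hi hYi using fun y : Y =>
    exists_mem_transfiniteIterate_lt (isSuccLimit_ord (hκ.trans (Order.le_succ κ))) (hYc y.2)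
  have hsup : ⨆ y, i y < (Order.succ κ).ord := Ordinal.iSup_lt_of_lt_cof
    (by rw [hY, (isRegular_succ hκ).cof_ord]; exact Order.lt_succ κ) hi
  have hYsup : Y ⊆ transfiniteIterate G (⨆ y, i y) A := fun y hy =>
    hmono (Ordinal.le_iSup i ⟨y, hy⟩) (hYi ⟨y, hy⟩)
  calc F Y ⊆ G (transfiniteIterate G (⨆ y, i y) A) := hGF _ Y hYsup hY
    _ = transfiniteIterate G (Order.succ (⨆ y, i y)) A :=
      (transfiniteIterate_succ _ _ _ (not_isMax _)).symm
    _ ⊆ transfiniteIterate G (Order.succ κ).ord A := hmono (Order.succ_le_of_lt hsup)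

theorem exists_fClosed_superset_mk_le (F : Set α → Set α) {κ : Cardinal.{u}} (hκ : ℵ₀ ≤ κ)
    (hκθ : κ < θ) (hA : #A ≤ θ) (hGS : ∀ S : Set α, S ⊆ G S)
    (hGF : ∀ S Y : Set α, Y ⊆ S → #Y = κ → F Y ⊆ G S) (hG : ∀ S : Set α, #S ≤ θ → #(G S) ≤ θ) :
    ∃ C, A ⊆ C ∧ FClosed F κ C ∧ #C ≤ θ := by
  refine ⟨transfiniteIterate G (Order.succ κ).ord A, ?_,
    fClosed_transfiniteIterate_ord_succ F hκ hGS hGF,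
    mk_transfiniteIterate_le (hκ.trans hκθ.le) hA hG _ ?_⟩
  · simpa only [transfiniteIterate_bot] using
      monotone_transfiniteIterate G A hGS (bot_le : ⊥ ≤ (Order.succ κ).ord)
  · rw [card_ord]; exact Order.succ_le_of_lt hκθ

end TransfiniteClosure

theorem mk_union_biUnion_le {α : Type u} {F : Set α → Set α} {θ : Cardinal.{u}} {S : Set α}
    {E : Set (Set α)} (hθ : ℵ₀ ≤ θ) (hS : #S ≤ θ) (hE : #E ≤ θ) (hF : ∀ Z ∈ E, #(F Z) ≤ θ) :
    #(S ∪ ⋃ Z ∈ E, F Z : Set α) ≤ θ :=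
  (mk_union_le _ _).trans <| add_le_of_le hθ hS <|
    (mk_biUnion_le _ _).trans (mul_le_of_le hθ hE (ciSup_le' fun Z => hF Z Z.2))

theorem exists_closing_step {α : Type u} {F : Set α → Set α} (hF : AntiMonotone F)
    {κ₁ κ₂ ρ θ : Cardinal.{u}} (h12 : κ₁ ≤ κ₂) (hbound : ∀ X : Set α, #X = κ₁ → #(F X) ≤ ρ)
    (hρθ : ρ ≤ θ) (hθ : ℵ₀ ≤ θ) (hdens : Density θ κ₁ κ₂ ≤ θ) :
    ∃ G : Set α → Set α, (∀ S, S ⊆ G S) ∧ (∀ S Y : Set α, Y ⊆ S → #Y = κ₂ → F Y ⊆ G S) ∧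
      ∀ S : Set α, #S ≤ θ → #(G S) ≤ θ := by
  have hE : ∀ S : Set α, ∃ E : Set (Set α), (∀ Z ∈ E, #Z = κ₁) ∧
      (∀ Y ⊆ S, #Y = κ₂ → ∃ Z ∈ E, Z ⊆ Y) ∧ (#S ≤ θ → #E ≤ θ) := by
    intro S
    by_cases hS : #S ≤ θ
    · obtain ⟨E, hEκ, hEdense, hEcard⟩ := exists_dense_subfamily_of_mk_le h12 hS
      exact ⟨E, hEκ, hEdense, fun _ => hEcard.trans hdens⟩
    · obtain ⟨E, hEκ, hEdense, -⟩ := exists_dense_subfamily_of_mk_le h12 (le_refl #S)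
      exact ⟨E, hEκ, hEdense, fun h => absurd h hS⟩
  choose E hEκ hEdense hEcard using hE
  refine ⟨fun S => S ∪ ⋃ Z ∈ E S, F Z, fun _ => subset_union_left, fun S Y hYS hY => ?_,
    fun S hS => mk_union_biUnion_le hθ hS (hEcard S hS) fun Z hZ =>
      (hbound Z (hEκ S Z hZ)).trans hρθ⟩
  obtain ⟨Z, hZ, hZY⟩ := hEdense S Y hYS hY
  exact (hF _ _ hZY).trans (subset_union_of_subset_right (subset_biUnion_of_mem hZ) _)

theorem closure_cardinality {α : Type} (F : Set α → Set α) (hF : AntiMonotone F)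
    (κ₁ κ₂ ρ : Cardinal.{0}) (hκ₁ : ℵ₀ ≤ κ₁) (h12 : κ₁ ≤ κ₂) (h2ρ : κ₂ < ρ)
    (hbound : ∀ X : Set α, #X = κ₁ → #(F X) ≤ ρ)
    (θ : Cardinal.{0}) (hθ : ρ ≤ θ) (hdens : Density θ κ₁ κ₂ = θ) :
    ∀ A : Set α, #A = θ → #(FClosure F κ₂ A) = θ := by
  intro A hA
  have hκ₂ : ℵ₀ ≤ κ₂ := hκ₁.trans h12
  obtain ⟨G, hGS, hGF, hG⟩ :=
    exists_closing_step hF h12 hbound hθ (hκ₂.trans (h2ρ.le.trans hθ)) hdens.le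
  obtain ⟨C, hAC, hC, hCθ⟩ :=
    exists_fClosed_superset_mk_le F hκ₂ (h2ρ.trans_le hθ) hA.le hGS hGF hG
  exact le_antisymm ((mk_le_mk_of_subset (fClosure_subset hAC hC)).trans hCθ)
    (hA ▸ mk_le_mk_of_subset (subset_fClosure F κ₂ A))
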